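/- Let $\tau \in M_{n\times n}(\mathbb{C})$ with $\mathrm{Im}\,\tau$ symmetric positive definite, and let $D \in GL(n,\mathbb{Z})$ satisfy $\mathrm{Im}\,\tau\, D = D^T \mathrm{Im}\,\tau^T$ and $\mathrm{Im}\,\tau\, D$ positive definite, and $A := \mathrm{Re}\,\tau\, D - D^T \mathrm{Re}\,\tau^T \in M_{n\times n}(\mathbb{Z})$. Let $\xi: \mathbb{Z}^n \to \mathbb{Z}/2$ satisfy $\xi(m_1+m_2) = \xi(m_1)+\xi(m_2) + m_1^T A m_2 \bmod 2$. For $k \in \mathbb{Z}^n$ define $\vartheta_{D,k}(z) = \sum_{m \in \mathbb{Z}^n} (-1)^{\xi(m)} e^{\pi i \langle D^{-1}k, A m\rangle} e^{\pi i \langle \tau D(m - D^{-1}k), m - D^{-1}k\rangle} e^{2\pi i \langle Dm - k, z\rangle}$. Then the series converges absolutely for every $z \in \mathbb{C}^n$, and satisfies $\vartheta_{D,k}(z + h) = \vartheta_{D,k}(z)$ for all $h \in \mathbb{Z}^n$ and $\vartheta_{D,k}(z + \tau^T h) = (-1)^{\xi(h)} e^{-\pi i \langle \tau D h, h\rangle}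 e^{-2\pi i \langle Dh, z\rangle} \vartheta_{D,k}(z)$ for all $h \in \mathbb{Z}^n$. -/

import Mathlib

/-!
Since `D` is unimodular, `p = D⁻¹k` is an integer vector, and with `S = τD` the term of index `m`
is `exp πi (ξ(m) + ⟨p, Am⟩ + ⟨S(m - p), m - p⟩ + 2⟨D(m - p), z⟩)`. Its modulus is the Gaussian
`exp(-π⟨Im(S) x, x⟩ - 2π⟨Dx, Im z⟩)` in `x = m - p ∈ ℤⁿ`, which is summable because
`Im S = Im τ D` is positive definite. Translating `z` by `h ∈ ℤⁿ` changes the exponent by an even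
integer. As `Im τ D` is symmetric, `S - Sᵀ = A`, and expanding the quadratic form shows that
translating `z` by `τᵀh` turns the term of index `m` into the automorphy factor times the term of
index `m + h`, up to the sign `(-1)^⟨m, Ah⟩`, which the quadratic refinement `ξ` absorbs;
reindexing the sum concludes.
-/

open Matrix

/-- One term of the multivariate theta series `ϑ_{D,k}`. -/
noncomputable def thetaMultiTerm (n : ℕ) (τ : Matrix (Fin n) (Fin n) ℂ)
    (D : Matrix (Fin n) (Fin n) ℤ) (ξ : (Fin n → ℤ) → ZMod 2)
    (k : Fin n → ℤ) (z : Fin n → ℂ) (m : Fin n → ℤ) : ℂ :=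
  let DC : Matrix (Fin n) (Fin n) ℂ := D.map (Int.cast : ℤ → ℂ)
  let Reτ : Matrix (Fin n) (Fin n) ℂ := τ.map (fun x => (x.re : ℂ))
  let A : Matrix (Fin n) (Fin n) ℂ := Reτ * DC - DCᵀ * Reτᵀ
  let kC : Fin n → ℂ := fun i => (k i : ℂ)
  let p : Fin n → ℂ := DC⁻¹.mulVec kC
  let mC : Fin n → ℂ := fun i => (m i : ℂ)
  (-1 : ℂ) ^ ((ξ m).val) *
  Complex.exp (Real.pi * Complex.I * dotProduct p (A.mulVec mC)) *
  Complex.exp (Real.pi * Complex.I *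
    dotProduct ((τ * DC).mulVec (mC - p)) (mC - p)) *
  Complex.exp (2 * Real.pi * Complex.I * dotProduct (DC.mulVec mC - kC) z)

/-- The multivariate theta function
`ϑ_{D,k}(z) = ∑_{m ∈ ℤⁿ} (-1)^{ξ(m)} e^{πi⟨D⁻¹k, Am⟩}
  e^{πi⟨τD(m-D⁻¹k), m-D⁻¹k⟩} e^{2πi⟨Dm-k, z⟩}`. -/
noncomputable def thetaMulti (n : ℕ) (τ : Matrix (Fin n) (Fin n) ℂ)
    (D : Matrix (Fin n) (Fin n) ℤ) (ξ : (Fin n → ℤ) → ZMod 2)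
    (k : Fin n → ℤ) (z : Fin n → ℂ) : ℂ :=
  ∑' m : Fin n → ℤ, thetaMultiTerm n τ D ξ k z m

section Gaussian
variable {ι : Type*} [Fintype ι]

lemma summable_exp_neg_mul_sq_add_mul {a : ℝ} (ha : 0 < a) (b : ℝ) :
    Summable fun q : ℤ => Real.exp (-a * q ^ 2 + b * q) := by
  have hτ : 0 < (Complex.I * (a / Real.pi : ℝ)).im := by simpa using div_pos ha Real.pi_pos
  refine ((summable_jacobiTheta₂_term_iff (Complex.I * (-b / (2 * Real.pi) : ℝ)) _).2
    hτ).norm.congr fun q => ?_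
  rw [norm_jacobiTheta₂_term]
  simp only [Complex.mul_im, Complex.I_re, Complex.I_im, Complex.ofReal_re, Complex.ofReal_im,
    zero_mul, one_mul, zero_add]
  congr 1
  field_simp
  ring

lemma summable_prod_apply_of_nonneg {β : Type*} {f : ι → β → ℝ} (hf : ∀ i, Summable (f i))
    (hf₀ : ∀ i q, 0 ≤ f i q) :
    Summable fun v : ι → β => ∏ i, f i (v i) := by
  classical
  refine summable_of_sum_le (c := ∏ i, ∑' q, f i q)
    (fun v => Finset.prod_nonneg fun i _ => hf₀ i _) fun u => ?_
  calc ∑ v ∈ u, ∏ i, f i (v i)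
      ≤ ∑ v ∈ Fintype.piFinset fun i => u.image (· i), ∏ i, f i (v i) :=
        Finset.sum_le_sum_of_subset_of_nonneg
          (fun v hv => Fintype.mem_piFinset.2 fun i => Finset.mem_image_of_mem _ hv)
          fun v _ _ => Finset.prod_nonneg fun i _ => hf₀ i _
    _ = ∏ i, ∑ q ∈ u.image (· i), f i q := (Finset.prod_univ_sum _ _).symm
    _ ≤ ∏ i, ∑' q, f i q :=
        Finset.prod_le_prod (fun i _ => Finset.sum_nonneg fun q _ => hf₀ i q)
          fun i _ => (hf i).sum_le_tsum _ fun q _ => hf₀ i q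

lemma Matrix.PosDef.exists_pos_mul_sum_sq_le {M : Matrix ι ι ℝ} (hM : M.PosDef) :
    ∃ c > 0, ∀ v : ι → ℝ, c * ∑ i, v i ^ 2 ≤ v ⬝ᵥ M *ᵥ v := by
  rcases isEmpty_or_nonempty ι with _ | _
  · exact ⟨1, one_pos, fun v => by simp⟩
  let Q : EuclideanSpace ℝ ι → ℝ := fun v => v.ofLp ⬝ᵥ M *ᵥ v.ofLp
  have hQ : Continuous Q := by fun_prop
  obtain ⟨u, hu, hmin⟩ := (isCompact_sphere (0 : EuclideanSpace ℝ ι) 1).exists_isMinOn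
    (NormedSpace.sphere_nonempty.2 zero_le_one) hQ.continuousOn
  have hu0 : u.ofLp ≠ 0 := by
    intro h
    simp [show u = 0 from congrArg (WithLp.toLp 2) h] at hu
  refine ⟨Q u, by simpa using hM.dotProduct_mulVec_pos hu0, fun v => ?_⟩
  rcases eq_or_ne v 0 with rfl | hv
  · simp
  set w : EuclideanSpace ℝ ι := WithLp.toLp 2 v
  have hw : 0 < ‖w‖ := norm_pos_iff.2 (by simpa [w] using hv)
  have hsum : ∑ i, v i ^ 2 = ‖w‖ ^ 2 := by
    simp [w, EuclideanSpace.norm_sq_eq]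
  have hle : Q u ≤ Q (‖w‖⁻¹ • w) := hmin (by simp [norm_smul, hw.ne'])
  have hscale : Q (‖w‖⁻¹ • w) = ‖w‖⁻¹ ^ 2 * (v ⬝ᵥ M *ᵥ v) := by
    simp only [Q, w, WithLp.ofLp_smul, mulVec_smul, dotProduct_smul, smul_dotProduct, smul_eq_mul]
    ring
  calc Q u * ∑ i, v i ^ 2 = ‖w‖ ^ 2 * Q u := by rw [hsum, mul_comm]
    _ ≤ ‖w‖ ^ 2 * Q (‖w‖⁻¹ • w) := by gcongr
    _ = v ⬝ᵥ M *ᵥ v := by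
      rw [hscale, ← mul_assoc, ← mul_pow, mul_inv_cancel₀ hw.ne', one_pow, one_mul]

lemma Matrix.PosDef.summable_exp_neg_dotProduct_mulVec_add {M : Matrix ι ι ℝ} (hM : M.PosDef)
    (w : ι → ℝ) :
    Summable fun v : ι → ℤ => Real.exp
      (-((fun i => (v i : ℝ)) ⬝ᵥ M *ᵥ fun i => (v i : ℝ)) + w ⬝ᵥ fun i => (v i : ℝ)) := by
  obtain ⟨c, hc, hcM⟩ := hM.exists_pos_mul_sum_sq_le
  refine Summable.of_nonneg_of_le (fun v => (Real.exp_pos _).le) (fun v => ?_)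
    (summable_prod_apply_of_nonneg (fun i => summable_exp_neg_mul_sq_add_mul hc (w i))
      fun i q => (Real.exp_pos _).le)
  rw [← Real.exp_sum, Real.exp_le_exp]
  have hquad := hcM fun i => (v i : ℝ)
  simp only [dotProduct, Finset.mul_sum] at hquad ⊢
  simp only [Finset.sum_add_distrib, neg_mul, Finset.sum_neg_distrib]
  linarith

end Gaussian

section Algebra
variable {ι R : Type*} [Fintype ι] [CommRing R]

lemma Matrix.mulVec_dotProduct_comm (S : Matrix ι ι R) (x y : ι → R) :
    S *ᵥ x ⬝ᵥ y = Sᵀ *ᵥ y ⬝ᵥ x := by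
  rw [dotProduct_comm, dotProduct_mulVec, mulVec_transpose]

lemma mulVec_add_dotProduct_add {S A : Matrix ι ι R} (hA : S - Sᵀ = A) (x h : ι → R) :
    S *ᵥ (x + h) ⬝ᵥ (x + h)
      = S *ᵥ x ⬝ᵥ x + 2 * (S *ᵥ x ⬝ᵥ h) - A *ᵥ x ⬝ᵥ h + S *ᵥ h ⬝ᵥ h := by
  have hcomm : S *ᵥ h ⬝ᵥ x = S *ᵥ x ⬝ᵥ h - A *ᵥ x ⬝ᵥ h := by
    rw [S.mulVec_dotProduct_comm h x, ← hA, sub_mulVec, sub_dotProduct, sub_sub_cancel]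
  simp only [mulVec_add, add_dotProduct, dotProduct_add, hcomm]
  ring

-- With `C = D` and `p = D⁻¹k`, this compares the phase of `thetaMultiTerm` at `(z + τᵀh, m)`
-- with the one at `(z, m + h)`.
lemma dotProduct_mulVec_add_transpose_mulVec (τ C : Matrix ι ι R) {A : Matrix ι ι R}
    (hA : τ * C - (τ * C)ᵀ = A) (p m h z : ι → R) :
    p ⬝ᵥ A *ᵥ m + (τ * C) *ᵥ (m - p) ⬝ᵥ (m - p) + 2 * (C *ᵥ (m - p) ⬝ᵥ (z + τᵀ *ᵥ h))
      = p ⬝ᵥ A *ᵥ (m + h) + (τ * C) *ᵥ (m + h - p) ⬝ᵥ (m + h - p)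
          + 2 * (C *ᵥ (m + h - p) ⬝ᵥ z)
          - (τ * C) *ᵥ h ⬝ᵥ h - 2 * (C *ᵥ h ⬝ᵥ z) - m ⬝ᵥ A *ᵥ h := by
  have hskew : ∀ x y, A *ᵥ x ⬝ᵥ y = -(x ⬝ᵥ A *ᵥ y) := fun x y => by
    rw [A.mulVec_dotProduct_comm, ← hA, transpose_sub, transpose_transpose, ← neg_sub, hA,
      neg_mulVec, neg_dotProduct, dotProduct_comm]
  have hτ : C *ᵥ (m - p) ⬝ᵥ τᵀ *ᵥ h = (τ * C) *ᵥ (m - p) ⬝ᵥ h := by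
    rw [dotProduct_mulVec, vecMul_transpose, mulVec_mulVec]
  rw [show m + h - p = (m - p) + h by abel, mulVec_add_dotProduct_add hA, dotProduct_add, hτ,
    hskew]
  simp only [mulVec_add, mulVec_sub, add_dotProduct, sub_dotProduct, dotProduct_add,
    dotProduct_sub]
  ring

end Algebra

section Casts
variable {m l R : Type*} [Fintype l] [Ring R]

lemma map_intCast_mulVec (B : Matrix m l ℤ) (x : l → ℤ) :
    B.map (Int.cast : ℤ → R) *ᵥ (fun i => (x i : R)) = fun i => ((B *ᵥ x) i : R) :=
  funext fun i => (RingHom.map_mulVec (Int.castRingHom R) B x i).symm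

lemma intCast_dotProduct (x y : l → ℤ) :
    (fun i => (x i : R)) ⬝ᵥ (fun i => (y i : R)) = ((x ⬝ᵥ y : ℤ) : R) :=
  (RingHom.map_dotProduct (Int.castRingHom R) x y).symm

lemma inv_map_intCast [DecidableEq l] {R : Type*} [CommRing R] {D : Matrix l l ℤ}
    (hD : IsUnit D.det) : (D.map (Int.cast : ℤ → R))⁻¹ = D⁻¹.map Int.cast :=
  inv_eq_right_inv <| by
    have h := congrArg (Matrix.map · (Int.castRingHom R)) (mul_nonsing_inv D hD)
    rwa [Matrix.map_mul, Matrix.map_one _ (map_zero _) (map_one _)] at h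

end Casts

lemma ZMod.exists_val_eq_val_add_val_add_two_mul {x y w : ZMod 2} {c : ℤ}
    (h : x = y + w + c) :
    ∃ j : ℤ, (x.val : ℤ) = y.val + w.val + c + 2 * j := by
  obtain ⟨j, hj⟩ : (2 : ℤ) ∣ x.val - y.val - w.val - c := by
    apply (ZMod.intCast_zmod_eq_zero_iff_dvd _ 2).1
    push_cast
    simp only [ZMod.natCast_val, ZMod.cast_id, h]
    ring
  exact ⟨j, by linarith⟩

section ComplexParts
variable {l : Type*} [Fintype l]

lemma im_mulVec_ofReal_dotProduct_ofReal (S : Matrix l l ℂ) (x y : l → ℝ) :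
    (S *ᵥ (fun i => (x i : ℂ)) ⬝ᵥ fun i => (y i : ℂ)).im
      = S.map Complex.im *ᵥ x ⬝ᵥ y := by
  simp [dotProduct, mulVec, Complex.im_sum, Complex.mul_im, Finset.sum_mul]

lemma im_ofReal_dotProduct (x : l → ℝ) (z : l → ℂ) :
    ((fun i => (x i : ℂ)) ⬝ᵥ z).im = x ⬝ᵥ fun i => (z i).im := by
  simp [dotProduct, Complex.im_sum]

end ComplexParts

section Theta
variable {n : ℕ} {τ : Matrix (Fin n) (Fin n) ℂ} {D : Matrix (Fin n) (Fin n) ℤ}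

lemma map_re_mul_sub_eq_map_intCast {AZ : Matrix (Fin n) (Fin n) ℤ}
    (hAZ : AZ.map (Int.cast : ℤ → ℝ) = τ.map Complex.re * D.map (Int.cast : ℤ → ℝ)
        - (D.map (Int.cast : ℤ → ℝ))ᵀ * (τ.map Complex.re)ᵀ) :
    τ.map (fun x => (x.re : ℂ)) * D.map (Int.cast : ℤ → ℂ)
      - (D.map (Int.cast : ℤ → ℂ))ᵀ * (τ.map fun x => (x.re : ℂ))ᵀ = AZ.map Int.cast := by
  ext i j
  have h := congrArg (fun M => (M i j : ℂ)) hAZ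
  simp only [Matrix.sub_apply, Matrix.mul_apply, Matrix.map_apply, Matrix.transpose_apply]
    at h ⊢
  push_cast at h ⊢
  exact h.symm

lemma mul_sub_transpose_eq_map_re (hImD : τ.map Complex.im * D.map (Int.cast : ℤ → ℝ)
      = (D.map (Int.cast : ℤ → ℝ))ᵀ * (τ.map Complex.im)ᵀ) :
    τ * D.map (Int.cast : ℤ → ℂ) - (τ * D.map (Int.cast : ℤ → ℂ))ᵀ
      = τ.map (fun x => (x.re : ℂ)) * D.map (Int.cast : ℤ → ℂ)
        - (D.map (Int.cast : ℤ → ℂ))ᵀ * (τ.map fun x => (x.re : ℂ))ᵀ := by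
  ext i j
  have h := congrArg (· i j) hImD
  apply Complex.ext
  · simp [Matrix.mul_apply, Complex.re_sum]
  · simpa [Matrix.mul_apply, Complex.im_sum, sub_eq_zero] using h

lemma map_im_mul_map_intCast :
    (τ * D.map (Int.cast : ℤ → ℂ)).map Complex.im = τ.map Complex.im * D.map Int.cast := by
  ext i j
  simp [Matrix.mul_apply, Complex.im_sum]

lemma thetaMultiTerm_eq_cexp (hD : IsUnit D.det) {AZ : Matrix (Fin n) (Fin n) ℤ}
    (hAZ : AZ.map (Int.cast : ℤ → ℝ) = τ.map Complex.re * D.map (Int.cast : ℤ → ℝ)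
        - (D.map (Int.cast : ℤ → ℝ))ᵀ * (τ.map Complex.re)ᵀ)
    (ξ : (Fin n → ℤ) → ZMod 2) (k : Fin n → ℤ) (z : Fin n → ℂ) (m : Fin n → ℤ) :
    thetaMultiTerm n τ D ξ k z m = Complex.exp (Real.pi * Complex.I * ((ξ m).val
      + (fun i => ((D⁻¹ *ᵥ k) i : ℂ)) ⬝ᵥ AZ.map Int.cast *ᵥ (fun i => (m i : ℂ))
      + (τ * D.map Int.cast) *ᵥ ((fun i => (m i : ℂ)) - fun i => ((D⁻¹ *ᵥ k) i : ℂ))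
          ⬝ᵥ ((fun i => (m i : ℂ)) - fun i => ((D⁻¹ *ᵥ k) i : ℂ))
      + 2 * (D.map Int.cast *ᵥ ((fun i => (m i : ℂ)) - fun i => ((D⁻¹ *ᵥ k) i : ℂ))
          ⬝ᵥ z))) := by
  have hp : (D.map (Int.cast : ℤ → ℂ))⁻¹ *ᵥ (fun i => (k i : ℂ))
      = fun i => ((D⁻¹ *ᵥ k) i : ℂ) := by
    rw [inv_map_intCast hD, map_intCast_mulVec]
  have hk : (fun i => (k i : ℂ)) = D.map Int.cast *ᵥ fun i => ((D⁻¹ *ᵥ k) i : ℂ) := by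
    rw [map_intCast_mulVec, mulVec_mulVec, mul_nonsing_inv D hD, one_mulVec]
  simp only [thetaMultiTerm]
  rw [hp, map_re_mul_sub_eq_map_intCast hAZ, ← Complex.exp_pi_mul_I, ← Complex.exp_nat_mul,
    ← Complex.exp_add, ← Complex.exp_add, ← Complex.exp_add, hk, ← mulVec_sub]
  congr 1
  ring

lemma norm_thetaMultiTerm (hD : IsUnit D.det) {AZ : Matrix (Fin n) (Fin n) ℤ}
    (hAZ : AZ.map (Int.cast : ℤ → ℝ) = τ.map Complex.re * D.map (Int.cast : ℤ → ℝ)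
        - (D.map (Int.cast : ℤ → ℝ))ᵀ * (τ.map Complex.re)ᵀ)
    (ξ : (Fin n → ℤ) → ZMod 2) (k : Fin n → ℤ) (z : Fin n → ℂ) (m : Fin n → ℤ) :
    ‖thetaMultiTerm n τ D ξ k z m‖ = Real.exp (-Real.pi *
      ((fun i => ((m - D⁻¹ *ᵥ k) i : ℝ)) ⬝ᵥ (τ.map Complex.im * D.map Int.cast) *ᵥ
          (fun i => ((m - D⁻¹ *ᵥ k) i : ℝ))
        + 2 * (D.map Int.cast *ᵥ (fun i => ((m - D⁻¹ *ᵥ k) i : ℝ))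
          ⬝ᵥ fun i => (z i).im))) := by
  have hx : ((fun i => (m i : ℂ)) - fun i => ((D⁻¹ *ᵥ k) i : ℂ))
      = fun i => (((m - D⁻¹ *ᵥ k) i : ℝ) : ℂ) := by
    funext i
    simp
  have hDx : D.map (Int.cast : ℤ → ℂ) *ᵥ (fun i => (((m - D⁻¹ *ᵥ k) i : ℝ) : ℂ))
      = fun i => ((D.map (Int.cast : ℤ → ℝ) *ᵥ fun i => ((m - D⁻¹ *ᵥ k) i : ℝ)) i : ℂ) :=
    by
    funext i
    simp [mulVec, dotProduct]
  have hre : ∀ w : ℂ, (Real.pi * Complex.I * w).re = -Real.pi * w.im := fun w => by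
    simp [Complex.mul_re]
  rw [thetaMultiTerm_eq_cexp hD hAZ, Complex.norm_exp, hre, hx, hDx, map_intCast_mulVec,
    intCast_dotProduct]
  simp only [Complex.add_im, Complex.natCast_im, Complex.intCast_im, Complex.mul_im,
    Complex.re_ofNat, Complex.im_ofNat, im_mulVec_ofReal_dotProduct_ofReal, im_ofReal_dotProduct,
    map_im_mul_map_intCast]
  rw [dotProduct_comm _ ((τ.map Complex.im * D.map Int.cast) *ᵥ _)]
  simp only [zero_add, zero_mul, add_zero]

lemma summable_thetaMultiTerm (hD : IsUnit D.det)
    (hImDPos : (τ.map Complex.im * D.map (Int.cast : ℤ → ℝ)).PosDef)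
    {AZ : Matrix (Fin n) (Fin n) ℤ}
    (hAZ : AZ.map (Int.cast : ℤ → ℝ) = τ.map Complex.re * D.map (Int.cast : ℤ → ℝ)
        - (D.map (Int.cast : ℤ → ℝ))ᵀ * (τ.map Complex.re)ᵀ)
    (ξ : (Fin n → ℤ) → ZMod 2) (k : Fin n → ℤ) (z : Fin n → ℂ) :
    Summable (thetaMultiTerm n τ D ξ k z) := by
  have hgauss := ((hImDPos.smul Real.pi_pos).summable_exp_neg_dotProduct_mulVec_add
    (-(2 * Real.pi) • ((D.map (Int.cast : ℤ → ℝ))ᵀ *ᵥ fun i => (z i).im)))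
  refine Summable.of_norm <|
    ((Equiv.subRight (D⁻¹ *ᵥ k)).summable_iff.2 hgauss).congr fun m => ?_
  rw [norm_thetaMultiTerm hD hAZ, Function.comp_apply, Equiv.subRight_apply]
  congr 1
  rw [Matrix.mulVec_dotProduct_comm (D.map Int.cast)]
  simp only [smul_mulVec, smul_dotProduct, dotProduct_smul, smul_eq_mul]
  ring

lemma thetaMultiTerm_add_intCast (ξ : (Fin n → ℤ) → ZMod 2) (k h : Fin n → ℤ)
    (z : Fin n → ℂ) (m : Fin n → ℤ) :
    thetaMultiTerm n τ D ξ k (z + fun i => (h i : ℂ)) m = thetaMultiTerm n τ D ξ k z m := by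
  have hint : (D.map Int.cast *ᵥ (fun i => (m i : ℂ)) - fun i => (k i : ℂ))
      ⬝ᵥ (fun i => (h i : ℂ)) = (((D *ᵥ m - k) ⬝ᵥ h : ℤ) : ℂ) := by
    rw [map_intCast_mulVec, ← intCast_dotProduct]
    congr 1
    funext i
    simp
  simp only [thetaMultiTerm]
  rw [dotProduct_add, mul_add, Complex.exp_add, hint, mul_comm _ ((_ : ℤ) : ℂ),
    Complex.exp_int_mul_two_pi_mul_I, mul_one]

lemma thetaMulti_add_intCast (ξ : (Fin n → ℤ) → ZMod 2) (k h : Fin n → ℤ)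
    (z : Fin n → ℂ) :
    thetaMulti n τ D ξ k (z + fun i => (h i : ℂ)) = thetaMulti n τ D ξ k z :=
  tsum_congr (thetaMultiTerm_add_intCast ξ k h z)

lemma thetaMultiTerm_add_transpose_mulVec (hD : IsUnit D.det)
    (hImD : τ.map Complex.im * D.map (Int.cast : ℤ → ℝ)
      = (D.map (Int.cast : ℤ → ℝ))ᵀ * (τ.map Complex.im)ᵀ)
    {AZ : Matrix (Fin n) (Fin n) ℤ}
    (hAZ : AZ.map (Int.cast : ℤ → ℝ) = τ.map Complex.re * D.map (Int.cast : ℤ → ℝ)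
        - (D.map (Int.cast : ℤ → ℝ))ᵀ * (τ.map Complex.re)ᵀ)
    {ξ : (Fin n → ℤ) → ZMod 2}
    (hξ : ∀ m₁ m₂ : Fin n → ℤ, ξ (m₁ + m₂) = ξ m₁ + ξ m₂ + ((m₁ ⬝ᵥ AZ *ᵥ m₂ : ℤ) : ZMod 2))
    (k h : Fin n → ℤ) (z : Fin n → ℂ) (m : Fin n → ℤ) :
    thetaMultiTerm n τ D ξ k (z + τᵀ *ᵥ fun i => (h i : ℂ)) m
      = (-1 : ℂ) ^ (ξ h).val
        * Complex.exp (-(Real.pi * Complex.I *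
            ((τ * D.map Int.cast) *ᵥ (fun i => (h i : ℂ)) ⬝ᵥ fun i => (h i : ℂ))))
        * Complex.exp (-(2 * Real.pi * Complex.I *
            (D.map Int.cast *ᵥ (fun i => (h i : ℂ)) ⬝ᵥ z)))
        * thetaMultiTerm n τ D ξ k z (m + h) := by
  have hA := (mul_sub_transpose_eq_map_re hImD).trans (map_re_mul_sub_eq_map_intCast hAZ)
  obtain ⟨j, hj⟩ := ZMod.exists_val_eq_val_add_val_add_two_mul (hξ m h)
  have hmh : (fun i => ((m + h) i : ℂ)) = (fun i => (m i : ℂ)) + fun i => (h i : ℂ) := by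
    funext i
    simp
  have hmAh : (fun i => (m i : ℂ)) ⬝ᵥ AZ.map Int.cast *ᵥ (fun i => (h i : ℂ))
      = ((m ⬝ᵥ AZ *ᵥ h : ℤ) : ℂ) := by
    rw [map_intCast_mulVec, intCast_dotProduct]
  have hshift := dotProduct_mulVec_add_transpose_mulVec τ _ hA
    (fun i => ((D⁻¹ *ᵥ k) i : ℂ)) (fun i => (m i : ℂ)) (fun i => (h i : ℂ)) z
  rw [thetaMultiTerm_eq_cexp hD hAZ, thetaMultiTerm_eq_cexp hD hAZ, hmh, ← Complex.exp_pi_mul_I,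
    ← Complex.exp_nat_mul, ← Complex.exp_add, ← Complex.exp_add, ← Complex.exp_add,
    Complex.exp_eq_exp_iff_exists_int]
  refine ⟨-((ξ h).val + m ⬝ᵥ AZ *ᵥ h + j), ?_⟩
  have hjC := congrArg (fun x : ℤ => (x : ℂ)) hj
  push_cast at hjC ⊢
  linear_combination (Real.pi * Complex.I) * (hshift - hjC - hmAh)

lemma thetaMulti_add_transpose_mulVec (hD : IsUnit D.det)
    (hImD : τ.map Complex.im * D.map (Int.cast : ℤ → ℝ)
      = (D.map (Int.cast : ℤ → ℝ))ᵀ * (τ.map Complex.im)ᵀ)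
    {AZ : Matrix (Fin n) (Fin n) ℤ}
    (hAZ : AZ.map (Int.cast : ℤ → ℝ) = τ.map Complex.re * D.map (Int.cast : ℤ → ℝ)
        - (D.map (Int.cast : ℤ → ℝ))ᵀ * (τ.map Complex.re)ᵀ)
    {ξ : (Fin n → ℤ) → ZMod 2}
    (hξ : ∀ m₁ m₂ : Fin n → ℤ, ξ (m₁ + m₂) = ξ m₁ + ξ m₂ + ((m₁ ⬝ᵥ AZ *ᵥ m₂ : ℤ) : ZMod 2))
    (k h : Fin n → ℤ) (z : Fin n → ℂ) :
    thetaMulti n τ D ξ k (z + τᵀ *ᵥ fun i => (h i : ℂ))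
      = (-1 : ℂ) ^ (ξ h).val
        * Complex.exp (-(Real.pi * Complex.I *
            ((τ * D.map Int.cast) *ᵥ (fun i => (h i : ℂ)) ⬝ᵥ fun i => (h i : ℂ))))
        * Complex.exp (-(2 * Real.pi * Complex.I *
            (D.map Int.cast *ᵥ (fun i => (h i : ℂ)) ⬝ᵥ z)))
        * thetaMulti n τ D ξ k z := by
  rw [thetaMulti, thetaMulti,
    tsum_congr (thetaMultiTerm_add_transpose_mulVec hD hImD hAZ hξ k h z), tsum_mul_left]
  congr 1
  exact (Equiv.addRight h).tsum_eq (thetaMultiTerm n τ D ξ k z)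

end Theta

theorem thetaMulti_quasi_periodicity_general
    (n : ℕ) (τ : Matrix (Fin n) (Fin n) ℂ) (D : Matrix (Fin n) (Fin n) ℤ)
    (hD : IsUnit D.det)
    (hImD : τ.map Complex.im * D.map (Int.cast : ℤ → ℝ)
      = (D.map (Int.cast : ℤ → ℝ))ᵀ * (τ.map Complex.im)ᵀ)
    (hImDPos : (τ.map Complex.im * D.map (Int.cast : ℤ → ℝ)).PosDef)
    (AZ : Matrix (Fin n) (Fin n) ℤ)
    (hAZ : AZ.map (Int.cast : ℤ → ℝ) =
      τ.map Complex.re * D.map (Int.cast : ℤ → ℝ)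
        - (D.map (Int.cast : ℤ → ℝ))ᵀ * (τ.map Complex.re)ᵀ)
    (ξ : (Fin n → ℤ) → ZMod 2)
    (hξ : ∀ m₁ m₂ : Fin n → ℤ, ξ (m₁ + m₂) = ξ m₁ + ξ m₂ +
      ((dotProduct m₁ (AZ.mulVec m₂) : ℤ) : ZMod 2))
    (k : Fin n → ℤ) :
    (∀ z : Fin n → ℂ, Summable (thetaMultiTerm n τ D ξ k z)) ∧
    (∀ (h : Fin n → ℤ) (z : Fin n → ℂ),
      thetaMulti n τ D ξ k (z + fun i => (h i : ℂ)) = thetaMulti n τ D ξ k z) ∧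
    (∀ (h : Fin n → ℤ) (z : Fin n → ℂ),
      thetaMulti n τ D ξ k (z + τᵀ.mulVec (fun i => (h i : ℂ))) =
        (-1 : ℂ) ^ ((ξ h).val) *
        Complex.exp (-(Real.pi * Complex.I *
          dotProduct ((τ * D.map (Int.cast : ℤ → ℂ)).mulVec (fun i => (h i : ℂ)))
            (fun i => (h i : ℂ)))) *
        Complex.exp (-(2 * Real.pi * Complex.I *
          dotProduct ((D.map (Int.cast : ℤ → ℂ)).mulVec (fun i => (h i : ℂ))) z)) *
        thetaMulti n τ D ξ k z) :=
  ⟨summable_thetaMultiTerm hD hImDPos hAZ ξ k, thetaMulti_add_intCast ξ k,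
    thetaMulti_add_transpose_mulVec hD hImD hAZ hξ k⟩

/-- the multivariate theta series converges absolutely and satisfies
`ϑ_{D,k}(z+h) = ϑ_{D,k}(z)` and
`ϑ_{D,k}(z+τᵀh) = (-1)^{ξ(h)} e^{-πi⟨τDh,h⟩} e^{-2πi⟨Dh,z⟩} ϑ_{D,k}(z)` for `h ∈ ℤⁿ`. -/
theorem thetaMulti_quasi_periodicity
    (n : ℕ) (τ : Matrix (Fin n) (Fin n) ℂ) (D : Matrix (Fin n) (Fin n) ℤ)
    (hD : IsUnit D.det)
    (hImSymm : (τ.map Complex.im).IsSymm)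
    (hImPos : (τ.map Complex.im).PosDef)
    (hImD : τ.map Complex.im * D.map (Int.cast : ℤ → ℝ)
      = (D.map (Int.cast : ℤ → ℝ))ᵀ * (τ.map Complex.im)ᵀ)
    (hImDPos : (τ.map Complex.im * D.map (Int.cast : ℤ → ℝ)).PosDef)
    (AZ : Matrix (Fin n) (Fin n) ℤ)
    (hAZ : AZ.map (Int.cast : ℤ → ℝ) =
      τ.map Complex.re * D.map (Int.cast : ℤ → ℝ)
        - (D.map (Int.cast : ℤ → ℝ))ᵀ * (τ.map Complex.re)ᵀ)
    (ξ : (Fin n → ℤ) → ZMod 2)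
    (hξ : ∀ m₁ m₂ : Fin n → ℤ, ξ (m₁ + m₂) = ξ m₁ + ξ m₂ +
      ((dotProduct m₁ (AZ.mulVec m₂) : ℤ) : ZMod 2))
    (k : Fin n → ℤ) :
    (∀ z : Fin n → ℂ, Summable (thetaMultiTerm n τ D ξ k z)) ∧
    (∀ (h : Fin n → ℤ) (z : Fin n → ℂ),
      thetaMulti n τ D ξ k (z + fun i => (h i : ℂ)) = thetaMulti n τ D ξ k z) ∧
    (∀ (h : Fin n → ℤ) (z : Fin n → ℂ),
      thetaMulti n τ D ξ k (z + τᵀ.mulVec (fun i => (h i : ℂ))) =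
        (-1 : ℂ) ^ ((ξ h).val) *
        Complex.exp (-(Real.pi * Complex.I *
          dotProduct ((τ * D.map (Int.cast : ℤ → ℂ)).mulVec (fun i => (h i : ℂ)))
            (fun i => (h i : ℂ)))) *
        Complex.exp (-(2 * Real.pi * Complex.I *
          dotProduct ((D.map (Int.cast : ℤ → ℂ)).mulVec (fun i => (h i : ℂ))) z)) *
        thetaMulti n τ D ξ k z) :=
  thetaMulti_quasi_periodicity_general n τ D hD hImD hImDPos AZ hAZ ξ hξ k
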